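/- Assume d1 < x_T < d2. Then u(x,s) → 0 as the distance from x to {d1,d2} tends to 0, uniformly for s in compact subsets of [0,T): for every T' ∈ [0,T) and every ε > 0 there exists δ > 0 such that for all s ∈ [0,T'] and all x ∈ (d1,d2) with min(x−d1, d2−x) < δ, one has u(x,s) < ε. -/

import Mathlib

/-- The deterministic trajectory `x⁰_{x,s}`. -/
noncomputable def traj (a0 a1 T xT x s t : ℝ) : ℝ :=
  (x + a0 / a1) * Real.sinh (a1 * (T - t)) / Real.sinh (a1 * (T - s)) +
    (xT + a0 / a1) * Real.sinh (a1 * (t - s)) / Real.sinh (a1 * (T - s)) - a0 / a1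

/-- The two-point cost `u(x,s;d,t)`. -/
noncomputable def cost (a0 a1 T xT x s d t : ℝ) : ℝ :=
  a1 * Real.sinh (a1 * (T - s)) * (d - traj a0 a1 T xT x s t) ^ 2 /
    (2 * Real.sinh (a1 * (T - t)) * Real.sinh (a1 * (t - s)))

/-- The exit cost `u(x,s) = inf { u(x,s;d,t) : d ∈ {d1,d2}, t ∈ (s,T) }`. -/
noncomputable def uval (a0 a1 T xT d1 d2 x s : ℝ) : ℝ :=
  sInf {r : ℝ | ∃ d, (d = d1 ∨ d = d2) ∧ ∃ t ∈ Set.Ioo s T, r = cost a0 a1 T xT x s d t}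

lemma my_sinh_le_mul_cosh {x : ℝ} (hx : 0 ≤ x) : Real.sinh x ≤ x * Real.cosh x := by
  have key : ∀ y : ℝ, HasDerivAt (fun y => y * Real.cosh y - Real.sinh y)
      (y * Real.sinh y) y := by
    intro y
    have h1 := ((hasDerivAt_id y).mul (Real.hasDerivAt_cosh y)).sub (Real.hasDerivAt_sinh y)
    rw [show y * Real.sinh y = 1 * Real.cosh y + id y * Real.sinh y - Real.cosh y by simp only [id]; ring]
    exact h1
  have mono : MonotoneOn (fun y => y * Real.cosh y - Real.sinh y) (Set.Ici 0) := by
    apply monotoneOn_of_deriv_nonneg (convex_Ici 0)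
    · exact Continuous.continuousOn (by continuity)
    · intro y _
      exact (key y).differentiableAt.differentiableWithinAt
    · intro y hy
      rw [interior_Ici] at hy
      rw [(key y).deriv]
      exact mul_nonneg hy.le (Real.sinh_nonneg_iff.mpr hy.le)
  have h := mono Set.self_mem_Ici (Set.mem_Ici.mpr hx) hx
  simp only [Real.sinh_zero, Real.cosh_zero, zero_mul, sub_zero, mul_zero, sub_self] at h
  linarith

lemma my_sInf_lt {S : Set ℝ} {r ε : ℝ} (hr : r ∈ S) (h : r < ε) (hε : 0 < ε) : sInf S < ε := by
  by_cases hb : BddBelow S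
  · exact (csInf_le hb hr).trans_lt h
  · rw [Real.sInf_of_not_bddBelow hb]; exact hε

lemma cost_abs (a0 a1 T xT x s d t : ℝ) :
    cost a0 a1 T xT x s d t =
      |a1| * Real.sinh (|a1| * (T - s)) * (d - traj a0 a1 T xT x s t) ^ 2 /
        (2 * Real.sinh (|a1| * (T - t)) * Real.sinh (|a1| * (t - s))) := by
  rcases abs_choice a1 with h | h
  · rw [h]; rfl
  · rw [h]
    simp only [cost, neg_mul, Real.sinh_neg]
    ring

lemma traj_abs (a0 a1 T xT x s t : ℝ) :
    traj a0 a1 T xT x s t =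
      (x + a0 / a1) * Real.sinh (|a1| * (T - t)) / Real.sinh (|a1| * (T - s)) +
        (xT + a0 / a1) * Real.sinh (|a1| * (t - s)) / Real.sinh (|a1| * (T - s)) - a0 / a1 := by
  rcases abs_choice a1 with h | h
  · rw [h]; rfl
  · rw [h]
    simp only [traj, neg_mul, Real.sinh_neg]
    ring

set_option maxHeartbeats 1000000 in
theorem stmt_11 (a0 a1 T xT d1 d2 : ℝ) (ha1 : a1 ≠ 0) (hT : 0 < T)
    (h1 : d1 < xT) (h2 : xT < d2) :
    ∀ T', 0 ≤ T' → T' < T → ∀ ε : ℝ, 0 < ε →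
      ∃ δ : ℝ, 0 < δ ∧ ∀ s ∈ Set.Icc 0 T', ∀ x ∈ Set.Ioo d1 d2,
        min (x - d1) (d2 - x) < δ → uval a0 a1 T xT d1 d2 x s < ε := by
  intro T' hT'0 hT'T ε hε
  have hb : (0:ℝ) < |a1| := abs_pos.mpr ha1
  have hTT' : 0 < T - T' := by linarith
  set m := Real.sinh (|a1| * ((T - T') / 2)) with hmdef
  have hm : 0 < m := by
    rw [hmdef]; exact Real.sinh_pos_iff.mpr (mul_pos hb (by linarith))
  set M := Real.cosh (|a1| * T) with hMdef
  have hM1 : 1 ≤ M := Real.one_le_cosh _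
  have hM0 : 0 < M := by linarith
  set Sb := Real.sinh (|a1| * T) with hSbdef
  have hSb : 0 < Sb := by
    rw [hSbdef]; exact Real.sinh_pos_iff.mpr (mul_pos hb hT)
  set K := (|d1 + a0 / a1| + |d2 + a0 / a1| + |xT + a0 / a1|) * |a1| * M ^ 2 / m with hKdef
  have hK : 0 ≤ K := by positivity
  set η := min ((T - T') / 2) (ε * m / (2 * Sb * (K ^ 2 + 1))) with hηdef
  have hη0 : 0 < η := lt_min (by linarith) (by positivity)
  have hη1 : η ≤ (T - T') / 2 := min_le_left _ _
  have hη2 : η ≤ ε * m / (2 * Sb * (K ^ 2 + 1)) := min_le_right _ _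
  set q := ε * m * η / (2 * Sb) with hqdef
  have hq : 0 < q := by positivity
  clear_value m M Sb K η q
  refine ⟨min 1 q, lt_min one_pos hq, ?_⟩
  rintro s ⟨hs0, hsT'⟩ x ⟨hxd1, hxd2⟩ hmin
  obtain ⟨d, hd, hdx⟩ : ∃ d, (d = d1 ∨ d = d2) ∧ |d - x| < min 1 q := by
    rcases le_total (x - d1) (d2 - x) with h | h
    · refine ⟨d1, Or.inl rfl, ?_⟩
      rw [abs_sub_comm, abs_of_pos (by linarith)]
      simpa [min_eq_left h] using hmin
    · refine ⟨d2, Or.inr rfl, ?_⟩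
      rw [abs_of_pos (by linarith)]
      simpa [min_eq_right h] using hmin
  set t := s + η with htdef
  clear_value t
  have hst : s < t := by rw [htdef]; linarith
  have htT : t < T := by rw [htdef]; linarith
  have hts : t - s = η := by rw [htdef]; ring
  have hmem : cost a0 a1 T xT x s d t ∈
      {r : ℝ | ∃ d', (d' = d1 ∨ d' = d2) ∧ ∃ t' ∈ Set.Ioo s T, r = cost a0 a1 T xT x s d' t'} :=
    ⟨d, hd, t, ⟨hst, htT⟩, rfl⟩
  refine my_sInf_lt hmem ?_ hε
  rw [cost_abs, hts]
  set N := d - traj a0 a1 T xT x s t with hNdef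
  set S := Real.sinh (|a1| * (T - s)) with hSdef
  set A := Real.sinh (|a1| * (T - t)) with hAdef
  set B := Real.sinh (|a1| * η) with hBdef
  clear_value N S A B
  have hTs1 : T - T' ≤ T - s := by linarith
  have hTs2 : T - s ≤ T := by linarith
  have hTt : (T - T') / 2 ≤ T - t := by rw [htdef]; linarith
  have hS : 0 < S := by rw [hSdef]; exact Real.sinh_pos_iff.mpr (mul_pos hb (by linarith))
  have hA : 0 < A := by rw [hAdef]; exact Real.sinh_pos_iff.mpr (mul_pos hb (by linarith))
  have hB : 0 < B := by rw [hBdef]; exact Real.sinh_pos_iff.mpr (mul_pos hb hη0)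
  have hmS : m ≤ S := by
    rw [hmdef, hSdef]
    exact Real.sinh_le_sinh.mpr (mul_le_mul_of_nonneg_left (by linarith) (abs_nonneg a1))
  have hmA : m ≤ A := by
    rw [hmdef, hAdef]
    exact Real.sinh_le_sinh.mpr (mul_le_mul_of_nonneg_left hTt (abs_nonneg a1))
  have hSSb : S ≤ Sb := by
    rw [hSdef, hSbdef]
    exact Real.sinh_le_sinh.mpr (mul_le_mul_of_nonneg_left hTs2 (abs_nonneg a1))
  have hAS : A ≤ S := by
    rw [hSdef, hAdef]
    exact Real.sinh_le_sinh.mpr (mul_le_mul_of_nonneg_left (by linarith) (abs_nonneg a1))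
  have hBlow : |a1| * η ≤ B := by
    rw [hBdef]
    exact (Real.self_lt_sinh_iff.mpr (mul_pos hb hη0)).le
  have hηT : η ≤ T := by linarith
  have hcoshη : Real.cosh (|a1| * η) ≤ M := by
    rw [hMdef]
    refine Real.cosh_le_cosh.mpr ?_
    rw [abs_of_nonneg (show (0:ℝ) ≤ |a1| * η by positivity),
      abs_of_nonneg (show (0:ℝ) ≤ |a1| * T by positivity)]
    exact mul_le_mul_of_nonneg_left hηT (abs_nonneg a1)
  have hcoshS : Real.cosh (|a1| * (T - s)) ≤ M := by
    rw [hMdef]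
    refine Real.cosh_le_cosh.mpr ?_
    rw [abs_of_nonneg (mul_nonneg (abs_nonneg a1) (by linarith : (0:ℝ) ≤ T - s)),
      abs_of_nonneg (show (0:ℝ) ≤ |a1| * T by positivity)]
    exact mul_le_mul_of_nonneg_left hTs2 (abs_nonneg a1)
  have hBup : B ≤ M * (|a1| * η) := by
    rw [hBdef]
    calc Real.sinh (|a1| * η) ≤ (|a1| * η) * Real.cosh (|a1| * η) :=
          my_sinh_le_mul_cosh (by positivity)
      _ ≤ (|a1| * η) * M := mul_le_mul_of_nonneg_left hcoshη (by positivity)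
      _ = M * (|a1| * η) := by ring
  -- S - A ≤ M^2 * (|a1| * η)
  have hAeq : A = S * Real.cosh (|a1| * η) - Real.cosh (|a1| * (T - s)) * B := by
    rw [hAdef, hSdef, hBdef, show |a1| * (T - t) = |a1| * (T - s) - |a1| * η by
      rw [htdef]; ring, Real.sinh_sub]
  have hcosh1 : 1 ≤ Real.cosh (|a1| * η) := Real.one_le_cosh _
  have hSA : S - A ≤ M ^ 2 * (|a1| * η) := by
    have e1 : S - A ≤ Real.cosh (|a1| * (T - s)) * B := by
      linarith [mul_nonneg hS.le (sub_nonneg.mpr hcosh1)]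
    have e2 : Real.cosh (|a1| * (T - s)) * B ≤ M * B :=
      mul_le_mul_of_nonneg_right hcoshS hB.le
    have e3 : M * B ≤ M * (M * (|a1| * η)) := mul_le_mul_of_nonneg_left hBup hM0.le
    have e4 : M * (M * (|a1| * η)) = M ^ 2 * (|a1| * η) := by ring
    linarith
  -- decomposition of N
  have hNval : N = (d - x) * (A / S) + (d + a0 / a1) * ((S - A) / S)
      - (xT + a0 / a1) * (B / S) := by
    rw [hNdef, traj_abs, hts, ← hSdef, ← hAdef, ← hBdef]
    field_simp
    ring
  -- bound |N|
  have hdsum : |d + a0 / a1| ≤ |d1 + a0 / a1| + |d2 + a0 / a1| := by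
    rcases hd with h | h <;> rw [h] <;>
      simp [abs_nonneg, le_add_of_nonneg_left, le_add_of_nonneg_right]
  have t1 : |(d - x) * (A / S)| ≤ min 1 q := by
    rw [abs_mul, abs_of_pos (div_pos hA hS)]
    calc |d - x| * (A / S) ≤ min 1 q * 1 :=
          mul_le_mul hdx.le ((div_le_one hS).mpr hAS) (by positivity)
            (le_min zero_le_one hq.le)
      _ = min 1 q := mul_one _
  have t2 : |(d + a0 / a1) * ((S - A) / S)| ≤
      (|d1 + a0 / a1| + |d2 + a0 / a1|) * (M ^ 2 * (|a1| * η) / m) := by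
    rw [abs_mul, abs_of_nonneg (div_nonneg (sub_nonneg.mpr hAS) hS.le)]
    refine mul_le_mul hdsum ?_ (div_nonneg (sub_nonneg.mpr hAS) hS.le) (by positivity)
    exact div_le_div₀ (by positivity) hSA hm hmS
  have t3 : |(xT + a0 / a1) * (B / S)| ≤ |xT + a0 / a1| * (M ^ 2 * (|a1| * η) / m) := by
    rw [abs_mul, abs_of_pos (div_pos hB hS)]
    refine mul_le_mul_of_nonneg_left ?_ (abs_nonneg _)
    refine div_le_div₀ (by positivity) ?_ hm hmS
    have hMM : M ≤ M ^ 2 := by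
      have h := mul_le_mul_of_nonneg_right hM1 hM0.le
      calc M = 1 * M := by ring
        _ ≤ M * M := h
        _ = M ^ 2 := by ring
    have := mul_le_mul_of_nonneg_right hMM (by positivity : (0:ℝ) ≤ |a1| * η)
    linarith
  have hKη : (|d1 + a0 / a1| + |d2 + a0 / a1|) * (M ^ 2 * (|a1| * η) / m)
      + |xT + a0 / a1| * (M ^ 2 * (|a1| * η) / m) = K * η := by
    rw [hKdef]; field_simp
  have hNabs : |N| ≤ min 1 q + K * η := by
    rw [hNval]
    have habs : |(d - x) * (A / S) + (d + a0 / a1) * ((S - A) / S)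
        - (xT + a0 / a1) * (B / S)| ≤ |(d - x) * (A / S)| + |(d + a0 / a1) * ((S - A) / S)|
          + |(xT + a0 / a1) * (B / S)| := by
      refine (abs_sub _ _).trans ?_
      linarith [abs_add_le ((d - x) * (A / S)) ((d + a0 / a1) * ((S - A) / S))]
    linarith [t1, t2, t3, hKη.ge, hKη.le]
  have hN2 : N ^ 2 ≤ 2 * (min 1 q) ^ 2 + 2 * K ^ 2 * η ^ 2 := by
    linarith [sq_abs N, mul_self_le_mul_self (abs_nonneg N) hNabs,
      sq_nonneg (min 1 q - K * η)]
  have hδ2 : (min 1 q) ^ 2 ≤ q := by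
    have h := mul_le_mul (min_le_left 1 q) (min_le_right 1 q)
      (le_min zero_le_one hq.le) zero_le_one
    rw [sq]
    linarith
  have e1 : Sb * (2 * (min 1 q) ^ 2) ≤ ε * m * η := by
    have hqq : Sb * (2 * q) = ε * m * η := by
      rw [hqdef]; field_simp
    have h' : 2 * (min 1 q) ^ 2 ≤ 2 * q := by linarith
    calc Sb * (2 * (min 1 q) ^ 2) ≤ Sb * (2 * q) :=
          mul_le_mul_of_nonneg_left h' hSb.le
      _ = ε * m * η := hqq
  have e2 : Sb * (2 * K ^ 2 * η ^ 2) < ε * m * η := by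
    have hh : η * (2 * Sb * (K ^ 2 + 1)) ≤ ε * m := (le_div_iff₀ (by positivity)).mp hη2
    linarith [mul_le_mul_of_nonneg_right hh hη0.le, mul_pos hSb (mul_pos hη0 hη0)]
  have hnum : Sb * N ^ 2 < ε * (2 * m * η) := by
    have e0 : Sb * N ^ 2 ≤ Sb * (2 * (min 1 q) ^ 2 + 2 * K ^ 2 * η ^ 2) :=
      mul_le_mul_of_nonneg_left hN2 hSb.le
    linarith
  have hcost_le : |a1| * S * N ^ 2 / (2 * A * B) ≤ Sb * N ^ 2 / (2 * m * η) := by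
    rw [div_le_div_iff₀ (by positivity) (by positivity)]
    have h2 : 2 * m * (|a1| * η) ≤ 2 * A * B := by
      linarith [mul_le_mul hmA hBlow (by positivity : (0:ℝ) ≤ |a1| * η) hA.le]
    have h3 : S * (2 * m * (|a1| * η)) ≤ Sb * (2 * A * B) :=
      mul_le_mul hSSb h2 (by positivity) hSb.le
    have h4 := mul_le_mul_of_nonneg_right h3 (sq_nonneg N)
    calc |a1| * S * N ^ 2 * (2 * m * η) = S * (2 * m * (|a1| * η)) * N ^ 2 := by ring
      _ ≤ Sb * (2 * A * B) * N ^ 2 := h4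
      _ = Sb * N ^ 2 * (2 * A * B) := by ring
  have hfin : Sb * N ^ 2 / (2 * m * η) < ε := by
    rw [div_lt_iff₀ (by positivity)]
    linarith
  linarith
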